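/- arXiv:1901.07069 — 4 statements merged into one kernel-verified Lean document; each statement's English description precedes it below -/
import Mathlib

section
/- Submodularity-type inequality for the state–action cost (equation (16), key step in the proof of Theorem 1). Let V : X → ℝ be monotone with respect to ⪯ and let w ∈ W. Let X¹, X² ∈ X satisfy: A¹_{r,k} = A²_{r,k} and D¹_k = D²_k for all k; A¹_{d,k} ≥ A²_{d,k} for every k with w_k = (1,2); and A¹_{d,k} = A²_{d,k} for every other k. Then for every w' ∈ W, J_V(X¹, w) − J_V(X¹, w') ≤ J_V(X², w) − J_V(X², w'). -/
/-!
Couple the transitions from two states through their success/failure outcomes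
`ω ∈ {s, f}^K`: the expected next value is the `ω`-average of `V` at a deterministic successor.
Sampling a new update forgets `A_d`, so `J_V(X¹, w) = J_V(X², w)`; and for any `w'` the
successors of `X²` are dominated outcome by outcome by those of `X¹`, so the monotonicity of `V`
gives `J_V(X², w') ≤ J_V(X¹, w')`.
-/

namespace AoI

/-- Per-device control action: idle `(0,0)`, continue the current in-transmission
update `(1,1)`, or sample and transmit a new update `(1,2)`. -/
inductive Act : Type
  | idle : Act
  | cont : Act
  | new  : Act
  deriving DecidableEq

instance : Fintype Act :=
  ⟨{Act.idle, Act.cont, Act.new}, by intro a; cases a <;> simp⟩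

/-- Per-device state `(A_d, A_r, D)`. -/
abbrev S : Type := ℕ × ℕ × ℕ

/-- Success successor under action `(1,1)`. -/
def sCont (L Ahd Ahr : ℕ) (x : S) : S :=
  if x.2.2 = 1 then (0, min (x.1 + 1) Ahr, L)
  else (min (x.1 + 1) Ahd, min (x.2.1 + 1) Ahr, x.2.2 - 1)

/-- Failure successor under `(1,1)`; this is also the unscheduled successor
`X_{k,un}` under action `(0,0)`. -/
def fCont (Ahd Ahr : ℕ) (x : S) : S :=
  (min (x.1 + 1) Ahd, min (x.2.1 + 1) Ahr, x.2.2)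

/-- Success successor under action `(1,2)`. -/
def sNew (L Ahr : ℕ) (x : S) : S := (1, min (x.2.1 + 1) Ahr, L - 1)

/-- Failure successor under action `(1,2)`. -/
def fNew (L Ahr : ℕ) (x : S) : S := (0, min (x.2.1 + 1) Ahr, L)

/-- Per-device transition kernel `P_k(x' | x, a)`. -/
def Pk (lam : ℝ) (L Ahd Ahr : ℕ) (x x' : S) : Act → ℝ
  | Act.idle => if x' = fCont Ahd Ahr x then 1 else 0
  | Act.cont =>
      (if x' = sCont L Ahd Ahr x then lam else 0) +
        (if x' = fCont Ahd Ahr x then 1 - lam else 0)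
  | Act.new =>
      (if x' = sNew L Ahr x then lam else 0) +
        (if x' = fNew L Ahr x then 1 - lam else 0)

/-- Per-device state space `{0,…,Âd} × {0,…,Âr} × {1,…,L}`. -/
def spaceS (L Ahd Ahr : ℕ) : Finset S :=
  Finset.range (Ahd + 1) ×ˢ (Finset.range (Ahr + 1) ×ˢ Finset.Icc 1 L)

/-- Joint state space `X = X_1 × ⋯ × X_K`. -/
def jointSpace {K : ℕ} (L Ahd Ahr : Fin K → ℕ) : Finset (Fin K → S) :=
  Fintype.piFinset fun k => spaceS (L k) (Ahd k) (Ahr k)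

/-- Joint transition kernel `P(X' | X, w) = ∏ₖ P_k(X'_k | X_k, w_k)`. -/
def Pjoint {K : ℕ} (lam : Fin K → ℝ) (L Ahd Ahr : Fin K → ℕ)
    (x x' : Fin K → S) (w : Fin K → Act) : ℝ :=
  ∏ k, Pk (lam k) (L k) (Ahd k) (Ahr k) (x k) (x' k) (w k)

/-- Feasible joint actions: at most `M` devices are scheduled. -/
def feasible (K M : ℕ) : Finset (Fin K → Act) :=
  Finset.univ.filter fun w => (Finset.univ.filter fun k => w k ≠ Act.idle).card ≤ M

lemma feasible_nonempty (K M : ℕ) : (feasible K M).Nonempty := by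
  refine ⟨fun _ => Act.idle, Finset.mem_filter.mpr ⟨Finset.mem_univ _, ?_⟩⟩
  simp

/-- The state–action cost `J_V(X, w) = Σₖ A_{r,k} + Σ_{X'∈X} P(X'|X,w) V(X')`. -/
def J {K : ℕ} (lam : Fin K → ℝ) (L Ahd Ahr : Fin K → ℕ)
    (V : (Fin K → S) → ℝ) (x : Fin K → S) (w : Fin K → Act) : ℝ :=
  (∑ k, ((x k).2.1 : ℝ)) +
    ∑ x' ∈ jointSpace L Ahd Ahr, Pjoint lam L Ahd Ahr x x' w * V x'

/-- Componentwise order on per-device states: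
`(A¹_d, A¹_r, D¹) ⪯ (A²_d, A²_r, D²)` iff `A¹_d ≤ A²_d`, `A¹_r ≤ A²_r`, `D¹ = D²`. -/
def xleS (x y : S) : Prop := x.1 ≤ y.1 ∧ x.2.1 ≤ y.2.1 ∧ x.2.2 = y.2.2

section
open Finset

theorem sum_prod_sum_ite_mul {ι β α R : Type*} [Fintype ι] [DecidableEq ι] [Fintype β]
    [DecidableEq α] [CommSemiring R] (p : ι → β → R) (f : ι → β → α) (V : (ι → α) → R)
    {s : Finset (ι → α)} (hs : ∀ ω : ι → β, (fun i => f i (ω i)) ∈ s) :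
    ∑ x ∈ s, (∏ i, ∑ b, p i b * if x i = f i b then 1 else 0) * V x =
      ∑ ω : ι → β, (∏ i, p i (ω i)) * V (fun i => f i (ω i)) := by
  simp_rw [Fintype.prod_sum, prod_mul_distrib, sum_mul]
  rw [sum_comm]
  refine Fintype.sum_congr _ _ fun ω => ?_
  simp_rw [prod_ite_zero, prod_const_one, mem_univ, true_implies, ← funext_iff, mul_ite,
    mul_one, mul_zero, ite_mul, zero_mul]
  rw [sum_ite_eq' s, if_pos (hs ω)]

end

/-- `true` encodes a successful transmission. -/
def outcomeProb (lam : ℝ) : Act → Bool → ℝ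
  | Act.idle, true => 0
  | Act.idle, false => 1
  | _, true => lam
  | _, false => 1 - lam

def nextState (L Ahd Ahr : ℕ) : Act → Bool → S → S
  | Act.idle, _ => fCont Ahd Ahr
  | Act.cont, true => sCont L Ahd Ahr
  | Act.cont, false => fCont Ahd Ahr
  | Act.new, true => sNew L Ahr
  | Act.new, false => fNew L Ahr

lemma outcomeProb_nonneg {lam : ℝ} (h0 : 0 ≤ lam) (h1 : lam ≤ 1) (a : Act) (b : Bool) :
    0 ≤ outcomeProb lam a b := by
  cases a <;> cases b <;> simp only [outcomeProb] <;> linarith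

lemma Pk_eq_sum_outcomeProb (lam : ℝ) (L Ahd Ahr : ℕ) (x x' : S) (a : Act) :
    Pk lam L Ahd Ahr x x' a =
      ∑ b, outcomeProb lam a b * if x' = nextState L Ahd Ahr a b x then 1 else 0 := by
  cases a <;> simp only [Pk, outcomeProb, Fintype.sum_bool, mul_ite, mul_one, mul_zero,
    ite_self, zero_add] <;> rfl

lemma nextState_mem_spaceS {L Ahd Ahr : ℕ} (hL : 2 ≤ L) (hAd : 1 ≤ Ahd) {x : S}
    (hx : x ∈ spaceS L Ahd Ahr) (a : Act) (b : Bool) :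
    nextState L Ahd Ahr a b x ∈ spaceS L Ahd Ahr := by
  simp only [spaceS, Finset.mem_product, Finset.mem_range, Finset.mem_Icc] at hx ⊢
  cases a <;> cases b <;> simp only [nextState, fCont, sCont, sNew, fNew] <;>
    (try split_ifs) <;> (try dsimp only) <;> omega

lemma nextState_new_congr (L Ahd Ahr : ℕ) {x y : S} (h : x.2.1 = y.2.1) (b : Bool) :
    nextState L Ahd Ahr Act.new b x = nextState L Ahd Ahr Act.new b y := by
  cases b <;> simp [nextState, sNew, fNew, h]

lemma xleS_refl (x : S) : xleS x x := ⟨le_rfl, le_rfl, rfl⟩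

lemma xleS_nextState (L Ahd Ahr : ℕ) {x y : S} (hd : x.1 ≤ y.1) (hr : x.2.1 = y.2.1)
    (hD : x.2.2 = y.2.2) (a : Act) (b : Bool) :
    xleS (nextState L Ahd Ahr a b x) (nextState L Ahd Ahr a b y) := by
  obtain ⟨xd, xr, xD⟩ := x
  obtain ⟨yd, yr, yD⟩ := y
  dsimp only at hd hr hD
  subst hr hD
  cases a <;> cases b <;> simp only [nextState, fCont, sCont, sNew, fNew, xleS] <;>
    (try split_ifs) <;> refine ⟨?_, ?_, ?_⟩ <;> (try dsimp only) <;> omega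

section
variable {K : ℕ} (lam : Fin K → ℝ) (L Ahd Ahr : Fin K → ℕ)

lemma nextState_mem_jointSpace (hL : ∀ k, 2 ≤ L k) (hAd : ∀ k, 1 ≤ Ahd k) {x : Fin K → S}
    (hx : x ∈ jointSpace L Ahd Ahr) (w : Fin K → Act) (ω : Fin K → Bool) :
    (fun k => nextState (L k) (Ahd k) (Ahr k) (w k) (ω k) (x k)) ∈ jointSpace L Ahd Ahr := by
  rw [jointSpace, Fintype.mem_piFinset] at hx ⊢
  exact fun k => nextState_mem_spaceS (hL k) (hAd k) (hx k) _ _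

lemma sum_Pjoint_mul_eq (hL : ∀ k, 2 ≤ L k) (hAd : ∀ k, 1 ≤ Ahd k)
    (V : (Fin K → S) → ℝ) {x : Fin K → S} (hx : x ∈ jointSpace L Ahd Ahr) (w : Fin K → Act) :
    ∑ x' ∈ jointSpace L Ahd Ahr, Pjoint lam L Ahd Ahr x x' w * V x' =
      ∑ ω : Fin K → Bool, (∏ k, outcomeProb (lam k) (w k) (ω k)) *
        V (fun k => nextState (L k) (Ahd k) (Ahr k) (w k) (ω k) (x k)) := by
  simp_rw [Pjoint, Pk_eq_sum_outcomeProb]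
  exact sum_prod_sum_ite_mul _ _ _ (nextState_mem_jointSpace L Ahd Ahr hL hAd hx w)

lemma J_mono (h0 : ∀ k, 0 ≤ lam k) (h1 : ∀ k, lam k ≤ 1)
    (hL : ∀ k, 2 ≤ L k) (hAd : ∀ k, 1 ≤ Ahd k) {V : (Fin K → S) → ℝ}
    (hV : ∀ x1 ∈ jointSpace L Ahd Ahr, ∀ x2 ∈ jointSpace L Ahd Ahr,
      (∀ k, xleS (x1 k) (x2 k)) → V x1 ≤ V x2)
    {x y : Fin K → S} (hx : x ∈ jointSpace L Ahd Ahr) (hy : y ∈ jointSpace L Ahd Ahr)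
    {w : Fin K → Act} (hr : ∀ k, (x k).2.1 = (y k).2.1)
    (hnext : ∀ k b, xleS (nextState (L k) (Ahd k) (Ahr k) (w k) b (x k))
      (nextState (L k) (Ahd k) (Ahr k) (w k) b (y k))) :
    J lam L Ahd Ahr V x w ≤ J lam L Ahd Ahr V y w := by
  rw [J, J, sum_Pjoint_mul_eq lam L Ahd Ahr hL hAd V hx,
    sum_Pjoint_mul_eq lam L Ahd Ahr hL hAd V hy]
  simp_rw [hr]
  gcongr with ω
  · exact Finset.prod_nonneg fun k _ => outcomeProb_nonneg (h0 k) (h1 k) _ _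
  · exact hV _ (nextState_mem_jointSpace L Ahd Ahr hL hAd hx w ω) _
      (nextState_mem_jointSpace L Ahd Ahr hL hAd hy w ω) fun k => hnext k (ω k)

end

theorem submodularity_state_action_cost_general
    (K M : ℕ)
    (lam : Fin K → ℝ) (L Ahd Ahr : Fin K → ℕ)
    (hlam : ∀ k, 0 < lam k ∧ lam k ≤ 1)
    (hL : ∀ k, 2 ≤ L k) (hAd : ∀ k, 1 ≤ Ahd k)
    (V : (Fin K → S) → ℝ)
    (hV : ∀ x1 ∈ jointSpace L Ahd Ahr, ∀ x2 ∈ jointSpace L Ahd Ahr,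
      (∀ k, xleS (x1 k) (x2 k)) → V x1 ≤ V x2)
    (w : Fin K → Act)
    (x1 x2 : Fin K → S)
    (hx1 : x1 ∈ jointSpace L Ahd Ahr) (hx2 : x2 ∈ jointSpace L Ahd Ahr)
    (hr : ∀ k, (x1 k).2.1 = (x2 k).2.1)
    (hd : ∀ k, (x1 k).2.2 = (x2 k).2.2)
    (hnew : ∀ k, w k = Act.new → (x2 k).1 ≤ (x1 k).1)
    (hoth : ∀ k, w k ≠ Act.new → (x1 k).1 = (x2 k).1) :
    ∀ w' ∈ feasible K M,
      J lam L Ahd Ahr V x1 w - J lam L Ahd Ahr V x1 w' ≤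
        J lam L Ahd Ahr V x2 w - J lam L Ahd Ahr V x2 w' := by
  intro w' _
  have h0 k := (hlam k).1.le
  have h1 k := (hlam k).2
  have hw : J lam L Ahd Ahr V x1 w ≤ J lam L Ahd Ahr V x2 w := by
    refine J_mono lam L Ahd Ahr h0 h1 hL hAd hV hx1 hx2 hr fun k b => ?_
    by_cases hk : w k = Act.new
    · rw [hk, nextState_new_congr _ _ _ (hr k)]
      exact xleS_refl _
    · rw [show x1 k = x2 k from Prod.ext (hoth k hk) (Prod.ext (hr k) (hd k))]
      exact xleS_refl _
  have hw' : J lam L Ahd Ahr V x2 w' ≤ J lam L Ahd Ahr V x1 w' := by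
    refine J_mono lam L Ahd Ahr h0 h1 hL hAd hV hx2 hx1 (fun k => (hr k).symm) fun k b =>
      xleS_nextState _ _ _ ?_ (hr k).symm (hd k).symm _ _
    by_cases hk : w k = Act.new
    · exact hnew k hk
    · exact (hoth k hk).ge
  linarith

/-- equation (16): submodularity-type inequality for the
state–action cost. -/
theorem submodularity_state_action_cost
    (K M : ℕ) (hK : 1 ≤ K) (hM1 : 1 ≤ M) (hM2 : M ≤ K)
    (lam : Fin K → ℝ) (L Ahd Ahr : Fin K → ℕ)
    (hlam : ∀ k, 0 < lam k ∧ lam k ≤ 1)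
    (hL : ∀ k, 2 ≤ L k) (hAd : ∀ k, 1 ≤ Ahd k) (hAr : ∀ k, 1 ≤ Ahr k)
    (V : (Fin K → S) → ℝ)
    (hV : ∀ x1 ∈ jointSpace L Ahd Ahr, ∀ x2 ∈ jointSpace L Ahd Ahr,
      (∀ k, xleS (x1 k) (x2 k)) → V x1 ≤ V x2)
    (w : Fin K → Act) (hw : w ∈ feasible K M)
    (x1 x2 : Fin K → S)
    (hx1 : x1 ∈ jointSpace L Ahd Ahr) (hx2 : x2 ∈ jointSpace L Ahd Ahr)
    (hr : ∀ k, (x1 k).2.1 = (x2 k).2.1)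
    (hd : ∀ k, (x1 k).2.2 = (x2 k).2.2)
    (hnew : ∀ k, w k = Act.new → (x2 k).1 ≤ (x1 k).1)
    (hoth : ∀ k, w k ≠ Act.new → (x1 k).1 = (x2 k).1) :
    ∀ w' ∈ feasible K M,
      J lam L Ahd Ahr V x1 w - J lam L Ahd Ahr V x1 w' ≤
        J lam L Ahd Ahr V x2 w - J lam L Ahd Ahr V x2 w' :=
  submodularity_state_action_cost_general K M lam L Ahd Ahr hlam hL hAd V hV w x1 x2 hx1 hx2 hr hd
    hnew hoth

end AoI
end

section
/- Threshold structure of the proposed suboptimal policy (Theorem 2). For each device j let V̂_j : X_j → ℝ satisfy V̂_j(X¹_j) ≤ V̂_j(X²_j) whenever X¹_j ⪯_j X²_j (as holds for the per-device value functions by Lemma 4), and define Ĵ(X, w) = Σ_{j=1}^K A_{r,j} + Σ_{X'∈X} P(X' | X, w)·Σ_{j=1}^K V̂_j(X'_j). Fix a device k, a feasible action ŵ* ∈ W with ŵ*_k = (1,2), and values of all state components other than A_{d,k}; for a ∈ {0,…,Âd_k} let X(a) denote the state with A_{d,k} = a and the other components as fixed. Then the set Φ̂ = {a ∈ {0,…,Âd_k}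 : Ĵ(X(a), ŵ*) ≤ Ĵ(X(a), w') for all w' ∈ W} is upward closed: if a ∈ Φ̂ and a ≤ a' ≤ Âd_k then a' ∈ Φ̂. Hence the suboptimal policy selects ŵ* at every state with A_{d,k} ≥ min Φ̂ (when Φ̂ ≠ ∅), i.e., it is threshold-based in the AoI at device k. -/
namespace AoI

lemma mem_spaceS {L Ahd Ahr : ℕ} {x : S} :
    x ∈ spaceS L Ahd Ahr ↔ x.1 ≤ Ahd ∧ x.2.1 ≤ Ahr ∧ 1 ≤ x.2.2 ∧ x.2.2 ≤ L := by
  obtain ⟨a, r, d⟩ := x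
  simp [spaceS, Nat.lt_succ_iff, and_assoc]

lemma fCont_mem {L Ahd Ahr : ℕ} {x : S} (hx : x ∈ spaceS L Ahd Ahr) :
    fCont Ahd Ahr x ∈ spaceS L Ahd Ahr := by
  rw [mem_spaceS] at hx ⊢
  simp only [fCont]
  omega

lemma sCont_mem {L Ahd Ahr : ℕ} (hL : 2 ≤ L) {x : S} (hx : x ∈ spaceS L Ahd Ahr) :
    sCont L Ahd Ahr x ∈ spaceS L Ahd Ahr := by
  rw [mem_spaceS] at hx
  rw [sCont]
  split <;> rw [mem_spaceS] <;> simp <;> omega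

lemma sNew_mem {L Ahd Ahr : ℕ} (hL : 2 ≤ L) (hAd : 1 ≤ Ahd) {x : S} :
    sNew L Ahr x ∈ spaceS L Ahd Ahr := by
  rw [mem_spaceS]; simp [sNew]; omega

lemma fNew_mem {L Ahd Ahr : ℕ} (hL : 2 ≤ L) {x : S} :
    fNew L Ahr x ∈ spaceS L Ahd Ahr := by
  rw [mem_spaceS]; simp [fNew]; omega

lemma sum_Pk {lam : ℝ} {L Ahd Ahr : ℕ} (hL : 2 ≤ L) (hAd : 1 ≤ Ahd)
    {x : S} (hx : x ∈ spaceS L Ahd Ahr) (a : Act) :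
    ∑ y ∈ spaceS L Ahd Ahr, Pk lam L Ahd Ahr x y a = 1 := by
  cases a <;>
    simp [Pk, Finset.sum_add_distrib, Finset.sum_ite_eq', fCont_mem hx,
      sCont_mem hL hx, sNew_mem hL hAd, fNew_mem hL]

/-- Expected next-step value of a single device. -/
def Ek (lam : ℝ) (L Ahd Ahr : ℕ) (V : S → ℝ) (x : S) (a : Act) : ℝ :=
  ∑ y ∈ spaceS L Ahd Ahr, Pk lam L Ahd Ahr x y a * V y

lemma sum_two_ite (c e : ℝ) (sp : Finset S) (s f : S) (hs : s ∈ sp) (hf : f ∈ sp)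
    (V : S → ℝ) :
    ∑ y ∈ sp, ((if y = s then c else 0) + (if y = f then e else 0)) * V y
      = c * V s + e * V f := by
  simp [add_mul, Finset.sum_add_distrib, ite_mul, Finset.sum_ite_eq', hs, hf]

lemma Ek_eval_idle {lam : ℝ} {L Ahd Ahr : ℕ} (V : S → ℝ) {x : S}
    (hx : x ∈ spaceS L Ahd Ahr) :
    Ek lam L Ahd Ahr V x Act.idle = V (fCont Ahd Ahr x) := by
  simp [Ek, Pk, ite_mul, Finset.sum_ite_eq', fCont_mem hx]

lemma Ek_eval_cont {lam : ℝ} {L Ahd Ahr : ℕ} (hL : 2 ≤ L) (V : S → ℝ) {x : S}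
    (hx : x ∈ spaceS L Ahd Ahr) :
    Ek lam L Ahd Ahr V x Act.cont
      = lam * V (sCont L Ahd Ahr x) + (1 - lam) * V (fCont Ahd Ahr x) := by
  simpa [Ek, Pk] using
    sum_two_ite lam (1 - lam) (spaceS L Ahd Ahr) _ _ (sCont_mem hL hx) (fCont_mem hx) V

lemma Ek_new_eq {lam : ℝ} {L Ahd Ahr : ℕ} {V : S → ℝ} {x1 x2 : S} (h12 : x1.2 = x2.2) :
    Ek lam L Ahd Ahr V x1 Act.new = Ek lam L Ahd Ahr V x2 Act.new := by
  have hs : sNew L Ahr x1 = sNew L Ahr x2 := by rw [sNew, sNew, h12]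
  have hf : fNew L Ahr x1 = fNew L Ahr x2 := by rw [fNew, fNew, h12]
  simp [Ek, Pk, hs, hf]

/-- Monotonicity of the per-device expected value in the device AoI component. -/
lemma Ek_mono {lam : ℝ} (hlam : 0 < lam ∧ lam ≤ 1) {L Ahd Ahr : ℕ} (hL : 2 ≤ L)
    (V : S → ℝ)
    (hV : ∀ x1 ∈ spaceS L Ahd Ahr, ∀ x2 ∈ spaceS L Ahd Ahr, xleS x1 x2 → V x1 ≤ V x2)
    {x1 x2 : S} (h1 : x1 ∈ spaceS L Ahd Ahr) (h2 : x2 ∈ spaceS L Ahd Ahr)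
    (ha : x1.1 ≤ x2.1) (h12 : x1.2 = x2.2) (act : Act) :
    Ek lam L Ahd Ahr V x1 act ≤ Ek lam L Ahd Ahr V x2 act := by
  have hfle : xleS (fCont Ahd Ahr x1) (fCont Ahd Ahr x2) :=
    ⟨min_le_min (by omega) le_rfl, by simp [fCont, h12], by simp [fCont, h12]⟩
  have hf : V (fCont Ahd Ahr x1) ≤ V (fCont Ahd Ahr x2) :=
    hV _ (fCont_mem h1) _ (fCont_mem h2) hfle
  cases act with
  | idle => rw [Ek_eval_idle V h1, Ek_eval_idle V h2]; exact hf
  | cont =>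
      rw [Ek_eval_cont hL V h1, Ek_eval_cont hL V h2]
      have hsle : xleS (sCont L Ahd Ahr x1) (sCont L Ahd Ahr x2) := by
        unfold sCont
        rw [h12]
        split
        · exact ⟨le_rfl, min_le_min (by omega) le_rfl, rfl⟩
        · exact ⟨min_le_min (by omega) le_rfl, le_rfl, rfl⟩
      have hs : V (sCont L Ahd Ahr x1) ≤ V (sCont L Ahd Ahr x2) :=
        hV _ (sCont_mem hL h1) _ (sCont_mem hL h2) hsle
      have := hlam.1
      have := hlam.2
      nlinarith
  | new =>
      exact le_of_eq (Ek_new_eq h12)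

/-- Decomposition of `J` into per-device expected values. -/
lemma J_eq {K : ℕ} (lam : Fin K → ℝ) (L Ahd Ahr : Fin K → ℕ)
    (hL : ∀ k, 2 ≤ L k) (hAd : ∀ k, 1 ≤ Ahd k)
    (Vk : Fin K → S → ℝ) {x : Fin K → S} (hx : x ∈ jointSpace L Ahd Ahr)
    (w : Fin K → Act) :
    J lam L Ahd Ahr (fun x' => ∑ j, Vk j (x' j)) x w
      = (∑ k, ((x k).2.1 : ℝ))
        + ∑ j, Ek (lam j) (L j) (Ahd j) (Ahr j) (Vk j) (x j) (w j) := by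
  have hxk : ∀ k, x k ∈ spaceS (L k) (Ahd k) (Ahr k) :=
    (Fintype.mem_piFinset.mp hx)
  unfold J
  congr 1
  rw [Finset.sum_congr rfl (fun x' _ => Finset.mul_sum _ _ _), Finset.sum_comm]
  refine Finset.sum_congr rfl fun j _ => ?_
  have key : ∀ x' : Fin K → S,
      Pjoint lam L Ahd Ahr x x' w * Vk j (x' j)
        = ∏ k, (Pk (lam k) (L k) (Ahd k) (Ahr k) (x k) (x' k) (w k)
            * (if k = j then Vk j (x' k) else 1)) := by
    intro x'
    rw [Finset.prod_mul_distrib, Finset.prod_ite_eq']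
    simp [Pjoint]
  rw [Finset.sum_congr rfl fun x' _ => key x']
  rw [jointSpace, ← Finset.prod_univ_sum (fun k => spaceS (L k) (Ahd k) (Ahr k))
    (fun k y => Pk (lam k) (L k) (Ahd k) (Ahr k) (x k) y (w k)
      * if k = j then Vk j y else 1)]
  have hfac : ∀ k : Fin K,
      (∑ y ∈ spaceS (L k) (Ahd k) (Ahr k),
        Pk (lam k) (L k) (Ahd k) (Ahr k) (x k) y (w k) * (if k = j then Vk j y else 1))
        = if k = j then Ek (lam j) (L j) (Ahd j) (Ahr j) (Vk j) (x j) (w j) else 1 := by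
    intro k
    by_cases hkj : k = j
    · subst hkj; simp [Ek]
    · simp only [hkj, if_false, mul_one]
      exact sum_Pk (hL k) (hAd k) (hxk k) (w k)
  rw [Finset.prod_congr rfl fun k _ => hfac k]
  simp

/-- Theorem 2: threshold structure of the proposed suboptimal
policy. With `Ĵ(X,w) = J_{Σⱼ V̂ⱼ}(X,w)` built from monotone per-device value
functions, the set of values `a` of `A_{d,k}` at which `ŵ*` (with
`ŵ*_k = (1,2)`) minimizes `Ĵ(X(a), ·)` over `W` is upward closed. -/
theorem threshold_structure_suboptimal_policy
    (K M : ℕ) (hK : 1 ≤ K) (hM1 : 1 ≤ M) (hM2 : M ≤ K)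
    (lam : Fin K → ℝ) (L Ahd Ahr : Fin K → ℕ)
    (hlam : ∀ k, 0 < lam k ∧ lam k ≤ 1)
    (hL : ∀ k, 2 ≤ L k) (hAd : ∀ k, 1 ≤ Ahd k) (hAr : ∀ k, 1 ≤ Ahr k)
    (Vk : Fin K → S → ℝ)
    (hVk : ∀ j : Fin K, ∀ x1 ∈ spaceS (L j) (Ahd j) (Ahr j),
      ∀ x2 ∈ spaceS (L j) (Ahd j) (Ahr j), xleS x1 x2 → Vk j x1 ≤ Vk j x2)
    (k : Fin K)
    (wstar : Fin K → Act) (hwfeas : wstar ∈ feasible K M) (hwk : wstar k = Act.new)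
    (x0 : Fin K → S) (hx0 : x0 ∈ jointSpace L Ahd Ahr) :
    ∀ a a' : ℕ, a ≤ a' → a' ≤ Ahd k →
      (∀ w' ∈ feasible K M,
        J lam L Ahd Ahr (fun x' => ∑ j, Vk j (x' j))
            (Function.update x0 k (a, (x0 k).2)) wstar ≤
          J lam L Ahd Ahr (fun x' => ∑ j, Vk j (x' j))
            (Function.update x0 k (a, (x0 k).2)) w') →
      (∀ w' ∈ feasible K M,
        J lam L Ahd Ahr (fun x' => ∑ j, Vk j (x' j))
            (Function.update x0 k (a', (x0 k).2)) wstar ≤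
          J lam L Ahd Ahr (fun x' => ∑ j, Vk j (x' j))
            (Function.update x0 k (a', (x0 k).2)) w') := by
  intro a a' haa' ha' hyp w' hw'
  have haAd : a ≤ Ahd k := haa'.trans ha'
  have hpk := Fintype.mem_piFinset.mp hx0 k
  have hmemS : ∀ b : ℕ, b ≤ Ahd k →
      ((b, (x0 k).2) : S) ∈ spaceS (L k) (Ahd k) (Ahr k) := by
    intro b hb
    rw [mem_spaceS] at hpk ⊢
    exact ⟨hb, hpk.2⟩
  have hmem : ∀ b : ℕ, b ≤ Ahd k →
      Function.update x0 k (b, (x0 k).2) ∈ jointSpace L Ahd Ahr := by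
    intro b hb
    refine Fintype.mem_piFinset.mpr fun j => ?_
    rcases eq_or_ne j k with rfl | hjk
    · rw [Function.update_self]; exact hmemS b hb
    · rw [Function.update_of_ne hjk]; exact Fintype.mem_piFinset.mp hx0 j
  have hAsum : ∀ b : ℕ,
      (∑ j, (((Function.update x0 k (b, (x0 k).2)) j).2.1 : ℝ))
        = ∑ j, ((x0 j).2.1 : ℝ) := by
    intro b
    refine Finset.sum_congr rfl fun j _ => ?_
    rcases eq_or_ne j k with rfl | hjk
    · rw [Function.update_self]
    · rw [Function.update_of_ne hjk]
  have hsum : ∀ (b : ℕ) (w : Fin K → Act),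
      (∑ j, Ek (lam j) (L j) (Ahd j) (Ahr j) (Vk j)
          ((Function.update x0 k (b, (x0 k).2)) j) (w j))
        = Ek (lam k) (L k) (Ahd k) (Ahr k) (Vk k) (b, (x0 k).2) (w k)
          + ∑ j ∈ Finset.univ.erase k,
              Ek (lam j) (L j) (Ahd j) (Ahr j) (Vk j) (x0 j) (w j) := by
    intro b w
    rw [← Finset.add_sum_erase _ _ (Finset.mem_univ k), Function.update_self]
    congr 1
    exact Finset.sum_congr rfl fun j hj => by
      rw [Function.update_of_ne (Finset.ne_of_mem_erase hj)]
  have hJb : ∀ (b : ℕ), b ≤ Ahd k → ∀ (w : Fin K → Act),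
      J lam L Ahd Ahr (fun x' => ∑ j, Vk j (x' j))
          (Function.update x0 k (b, (x0 k).2)) w
        = (∑ j, ((x0 j).2.1 : ℝ))
          + (Ek (lam k) (L k) (Ahd k) (Ahr k) (Vk k) (b, (x0 k).2) (w k)
            + ∑ j ∈ Finset.univ.erase k,
                Ek (lam j) (L j) (Ahd j) (Ahr j) (Vk j) (x0 j) (w j)) := by
    intro b hb w
    rw [J_eq lam L Ahd Ahr hL hAd Vk (hmem b hb) w, hAsum b, hsum b w]
  rw [hJb a' ha' wstar, hJb a' ha' w']
  have h1 := hyp w' hw'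
  rw [hJb a haAd wstar, hJb a haAd w'] at h1
  have hnew : Ek (lam k) (L k) (Ahd k) (Ahr k) (Vk k) (a', (x0 k).2) (wstar k)
      = Ek (lam k) (L k) (Ahd k) (Ahr k) (Vk k) (a, (x0 k).2) (wstar k) := by
    rw [hwk]; exact Ek_new_eq rfl
  have hmono := Ek_mono (hlam k) (hL k) (Vk k) (hVk k)
    (hmemS a haAd) (hmemS a' ha') haa' rfl (w' k)
  linarith


end AoI
end

section
/- Submodularity-type inequality for the state–action cost in the random-arrival model (key step in the proof of Theorem 3). Let V : X → ℝ be monotone with respect to ⪯ and let w ∈ W. Let X¹, X² ∈ X satisfy: A¹_{b,k} = A²_{b,k}, A¹_{r,k} = A²_{r,k} and D¹_k = D²_k for all k; A¹_{d,k} ≥ A²_{d,k} for every k with w_k = (1,2); and A¹_{d,k} = A²_{d,k} for every other k. Then for every w' ∈ W, J_V(X¹, w) − J_V(X¹, w') ≤ J_V(X², w) − J_V(X², w'). -/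
namespace AoIRandom

/-- Per-device control action: idle `(0,0)`, continue the current
in-transmission update `(1,1)`, or start transmitting the buffered update
`(1,2)`. -/
inductive Act : Type
  | idle : Act
  | cont : Act
  | new  : Act
  deriving DecidableEq

instance : Fintype Act :=
  ⟨{Act.idle, Act.cont, Act.new}, by intro a; cases a <;> simp⟩

/-- Per-device state `(A_b, A_d, A_r, D)`. -/
abbrev S : Type := ℕ × ℕ × ℕ × ℕ

/-- Success successor under `(1,1)` when a new update arrives. -/
def sCont1 (L Ahd Ahr : ℕ) (x : S) : S :=
  if x.2.2.2 = 1 then (1, 1, min (x.2.1 + 1) Ahr, L)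
  else (1, min (x.2.1 + 1) Ahd, min (x.2.2.1 + 1) Ahr, x.2.2.2 - 1)

/-- Success successor under `(1,1)` when no update arrives. -/
def sCont2 (L Ahb Ahd Ahr : ℕ) (x : S) : S :=
  if x.2.2.2 = 1 then
    (min (x.1 + 1) Ahb, min (x.1 + 1) Ahd, min (x.2.1 + 1) Ahr, L)
  else
    (min (x.1 + 1) Ahb, min (x.2.1 + 1) Ahd, min (x.2.2.1 + 1) Ahr, x.2.2.2 - 1)

/-- Failure successor under `(1,1)` when a new update arrives; this is also the
unscheduled successor `X¹_{k,un}` under `(0,0)`. -/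
def fCont1 (Ahd Ahr : ℕ) (x : S) : S :=
  (1, min (x.2.1 + 1) Ahd, min (x.2.2.1 + 1) Ahr, x.2.2.2)

/-- Failure successor under `(1,1)` when no update arrives; this is also the
unscheduled successor `X²_{k,un}` under `(0,0)`. -/
def fCont2 (Ahb Ahd Ahr : ℕ) (x : S) : S :=
  (min (x.1 + 1) Ahb, min (x.2.1 + 1) Ahd, min (x.2.2.1 + 1) Ahr, x.2.2.2)

/-- Success successor under `(1,2)` when a new update arrives. -/
def sNew1 (L Ahr : ℕ) (x : S) : S := (1, 1, min (x.2.2.1 + 1) Ahr, L - 1)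

/-- Success successor under `(1,2)` when no update arrives. -/
def sNew2 (L Ahb Ahd Ahr : ℕ) (x : S) : S :=
  (min (x.1 + 1) Ahb, min (x.1 + 1) Ahd, min (x.2.2.1 + 1) Ahr, L - 1)

/-- Failure successor under `(1,2)` when a new update arrives. -/
def fNew1 (L Ahr : ℕ) (x : S) : S := (1, 1, min (x.2.2.1 + 1) Ahr, L)

/-- Failure successor under `(1,2)` when no update arrives. -/
def fNew2 (L Ahb Ahd Ahr : ℕ) (x : S) : S :=
  (min (x.1 + 1) Ahb, min (x.1 + 1) Ahd, min (x.2.2.1 + 1) Ahr, L)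

/-- Per-device transition kernel `P_k(x' | x, a)` in the random-arrival model. -/
def Pk (lam rho : ℝ) (L Ahb Ahd Ahr : ℕ) (x x' : S) : Act → ℝ
  | Act.idle =>
      rho * (if x' = fCont1 Ahd Ahr x then 1 else 0) +
        (1 - rho) * (if x' = fCont2 Ahb Ahd Ahr x then 1 else 0)
  | Act.cont =>
      rho * lam * (if x' = sCont1 L Ahd Ahr x then 1 else 0) +
        rho * (1 - lam) * (if x' = fCont1 Ahd Ahr x then 1 else 0) +
        (1 - rho) * lam * (if x' = sCont2 L Ahb Ahd Ahr x then 1 else 0) +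
        (1 - rho) * (1 - lam) * (if x' = fCont2 Ahb Ahd Ahr x then 1 else 0)
  | Act.new =>
      rho * lam * (if x' = sNew1 L Ahr x then 1 else 0) +
        rho * (1 - lam) * (if x' = fNew1 L Ahr x then 1 else 0) +
        (1 - rho) * lam * (if x' = sNew2 L Ahb Ahd Ahr x then 1 else 0) +
        (1 - rho) * (1 - lam) * (if x' = fNew2 L Ahb Ahd Ahr x then 1 else 0)

/-- Per-device state space `{0,…,Âb} × {0,…,Âd} × {0,…,Âr} × {1,…,L}`. -/
def spaceS (L Ahb Ahd Ahr : ℕ) : Finset S :=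
  Finset.range (Ahb + 1) ×ˢ
    (Finset.range (Ahd + 1) ×ˢ (Finset.range (Ahr + 1) ×ˢ Finset.Icc 1 L))

/-- Joint state space `X = X_1 × ⋯ × X_K`. -/
def jointSpace {K : ℕ} (L Ahb Ahd Ahr : Fin K → ℕ) : Finset (Fin K → S) :=
  Fintype.piFinset fun k => spaceS (L k) (Ahb k) (Ahd k) (Ahr k)

/-- Joint transition kernel `P(X' | X, w) = ∏ₖ P_k(X'_k | X_k, w_k)`. -/
def Pjoint {K : ℕ} (lam rho : Fin K → ℝ) (L Ahb Ahd Ahr : Fin K → ℕ)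
    (x x' : Fin K → S) (w : Fin K → Act) : ℝ :=
  ∏ k, Pk (lam k) (rho k) (L k) (Ahb k) (Ahd k) (Ahr k) (x k) (x' k) (w k)

/-- Feasible joint actions: at most `M` devices are scheduled. -/
def feasible (K M : ℕ) : Finset (Fin K → Act) :=
  Finset.univ.filter fun w => (Finset.univ.filter fun k => w k ≠ Act.idle).card ≤ M

lemma feasible_nonempty (K M : ℕ) : (feasible K M).Nonempty := by
  refine ⟨fun _ => Act.idle, Finset.mem_filter.mpr ⟨Finset.mem_univ _, ?_⟩⟩
  simp

/-- The state–action cost `J_V(X, w) = Σₖ A_{r,k} + Σ_{X'∈X} P(X'|X,w) V(X')`. -/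
def J {K : ℕ} (lam rho : Fin K → ℝ) (L Ahb Ahd Ahr : Fin K → ℕ)
    (V : (Fin K → S) → ℝ) (x : Fin K → S) (w : Fin K → Act) : ℝ :=
  (∑ k, ((x k).2.2.1 : ℝ)) +
    ∑ x' ∈ jointSpace L Ahb Ahd Ahr, Pjoint lam rho L Ahb Ahd Ahr x x' w * V x'

/-- Componentwise order on per-device states: `A¹_b ≤ A²_b`, `A¹_d ≤ A²_d`,
`A¹_r ≤ A²_r` and `D¹ = D²`. -/
def xleS (x y : S) : Prop :=
  x.1 ≤ y.1 ∧ x.2.1 ≤ y.2.1 ∧ x.2.2.1 ≤ y.2.2.1 ∧ x.2.2.2 = y.2.2.2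

/-! Under the action `w`, a device with `w_k = (1,2)` discards its in-transmission update, so its
successor state does not depend on `A_d`; hence `X¹` and `X²` have the same successors under `w`
and `J_V(X¹, w) = J_V(X², w)`. Under every action the successors are monotone in the current
state, and `X² ⪯ X¹`, so monotonicity of `V` gives `J_V(X², w') ≤ J_V(X¹, w')`. -/

/-- An outcome `o = (arrival, success)` of a slot. For an idle device the success flag is
irrelevant; its two values carry weights `lam` and `1 - lam`, which sum to one. -/
def outcomeWeight (lam rho : ℝ) (o : Bool × Bool) : ℝ :=
  (if o.1 then rho else 1 - rho) * (if o.2 then lam else 1 - lam)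

def succState (L Ahb Ahd Ahr : ℕ) (a : Act) (o : Bool × Bool) (x : S) : S :=
  match a, o with
  | Act.idle, (true, _) => fCont1 Ahd Ahr x
  | Act.idle, (false, _) => fCont2 Ahb Ahd Ahr x
  | Act.cont, (true, true) => sCont1 L Ahd Ahr x
  | Act.cont, (true, false) => fCont1 Ahd Ahr x
  | Act.cont, (false, true) => sCont2 L Ahb Ahd Ahr x
  | Act.cont, (false, false) => fCont2 Ahb Ahd Ahr x
  | Act.new, (true, true) => sNew1 L Ahr x
  | Act.new, (true, false) => fNew1 L Ahr x
  | Act.new, (false, true) => sNew2 L Ahb Ahd Ahr x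
  | Act.new, (false, false) => fNew2 L Ahb Ahd Ahr x

lemma outcomeWeight_nonneg {lam rho : ℝ} (hlam : 0 ≤ lam ∧ lam ≤ 1) (hrho : 0 ≤ rho ∧ rho ≤ 1)
    (o : Bool × Bool) : 0 ≤ outcomeWeight lam rho o := by
  unfold outcomeWeight
  apply mul_nonneg <;> split_ifs <;> linarith

lemma Pk_eq_sum_outcomeWeight (lam rho : ℝ) (L Ahb Ahd Ahr : ℕ) (x x' : S) (a : Act) :
    Pk lam rho L Ahb Ahd Ahr x x' a =
      ∑ o : Bool × Bool, outcomeWeight lam rho o *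
        if x' = succState L Ahb Ahd Ahr a o x then 1 else 0 := by
  cases a <;>
    simp only [Pk, outcomeWeight, succState, Fintype.sum_prod_type, Fintype.sum_bool,
      Bool.false_eq_true, ↓reduceIte, mul_ite, mul_one, mul_zero] <;>
    split_ifs <;> simp_all <;> ring

lemma succState_mem_spaceS {L Ahb Ahd Ahr : ℕ} (hL : 2 ≤ L) (hAb : 1 ≤ Ahb) (hAd : 1 ≤ Ahd)
    (a : Act) (o : Bool × Bool) {x : S} (hx : x ∈ spaceS L Ahb Ahd Ahr) :
    succState L Ahb Ahd Ahr a o x ∈ spaceS L Ahb Ahd Ahr := by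
  obtain ⟨b, d, r, D⟩ := x
  obtain ⟨arrival, success⟩ := o
  simp only [spaceS, Finset.mem_product, Finset.mem_range, Finset.mem_Icc] at hx
  cases a <;> cases arrival <;> cases success <;>
    simp only [succState, sCont1, sCont2, fCont1, fCont2, sNew1, sNew2, fNew1, fNew2] <;>
    (try split_ifs) <;>
    simp only [spaceS, Finset.mem_product, Finset.mem_range, Finset.mem_Icc] <;> omega

lemma succState_mono (L Ahb Ahd Ahr : ℕ) (a : Act) (o : Bool × Bool) {x y : S}
    (h : xleS x y) : xleS (succState L Ahb Ahd Ahr a o x) (succState L Ahb Ahd Ahr a o y) := by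
  obtain ⟨b, d, r, D⟩ := x
  obtain ⟨b', d', r', D'⟩ := y
  obtain ⟨arrival, success⟩ := o
  simp only [xleS] at h
  obtain ⟨hb, hd, hr, rfl⟩ := h
  cases a <;> cases arrival <;> cases success <;>
    simp only [succState, sCont1, sCont2, fCont1, fCont2, sNew1, sNew2, fNew1, fNew2] <;>
    (try split_ifs) <;> simp only [xleS, and_true] <;> omega

lemma succState_new_congr (L Ahb Ahd Ahr : ℕ) (o : Bool × Bool) {x y : S}
    (hb : x.1 = y.1) (hr : x.2.2.1 = y.2.2.1) :
    succState L Ahb Ahd Ahr Act.new o x = succState L Ahb Ahd Ahr Act.new o y := by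
  obtain ⟨arrival, success⟩ := o
  cases arrival <;> cases success <;> simp [succState, sNew1, sNew2, fNew1, fNew2, hb, hr]

section Joint

variable {K : ℕ} (lam rho : Fin K → ℝ) (L Ahb Ahd Ahr : Fin K → ℕ)

def jointWeight (ω : Fin K → Bool × Bool) : ℝ :=
  ∏ k, outcomeWeight (lam k) (rho k) (ω k)

def jointSucc (w : Fin K → Act) (ω : Fin K → Bool × Bool) (x : Fin K → S) : Fin K → S :=
  fun k => succState (L k) (Ahb k) (Ahd k) (Ahr k) (w k) (ω k) (x k)

variable {lam rho L Ahb Ahd Ahr}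

lemma jointWeight_nonneg (hlam : ∀ k, 0 ≤ lam k ∧ lam k ≤ 1)
    (hrho : ∀ k, 0 ≤ rho k ∧ rho k ≤ 1) (ω : Fin K → Bool × Bool) :
    0 ≤ jointWeight lam rho ω :=
  Finset.prod_nonneg fun k _ => outcomeWeight_nonneg (hlam k) (hrho k) (ω k)

lemma jointSucc_mem_jointSpace (hL : ∀ k, 2 ≤ L k) (hAb : ∀ k, 1 ≤ Ahb k)
    (hAd : ∀ k, 1 ≤ Ahd k) (w : Fin K → Act)
    (ω : Fin K → Bool × Bool) {x : Fin K → S} (hx : x ∈ jointSpace L Ahb Ahd Ahr) :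
    jointSucc L Ahb Ahd Ahr w ω x ∈ jointSpace L Ahb Ahd Ahr := by
  rw [jointSpace, Fintype.mem_piFinset] at hx ⊢
  exact fun k => succState_mem_spaceS (hL k) (hAb k) (hAd k) (w k) (ω k) (hx k)

lemma Pjoint_eq_sum_jointWeight (x x' : Fin K → S) (w : Fin K → Act) :
    Pjoint lam rho L Ahb Ahd Ahr x x' w =
      ∑ ω, jointWeight lam rho ω * if x' = jointSucc L Ahb Ahd Ahr w ω x then 1 else 0 := by
  simp only [Pjoint, Pk_eq_sum_outcomeWeight, Finset.prod_univ_sum, Fintype.piFinset_univ]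
  refine Finset.sum_congr rfl fun ω _ => ?_
  rw [Finset.prod_mul_distrib, Finset.prod_boole, jointWeight]
  simp [jointSucc, funext_iff]

lemma J_eq_sum_jointWeight (hL : ∀ k, 2 ≤ L k) (hAb : ∀ k, 1 ≤ Ahb k) (hAd : ∀ k, 1 ≤ Ahd k)
    (V : (Fin K → S) → ℝ) {x : Fin K → S}
    (hx : x ∈ jointSpace L Ahb Ahd Ahr) (w : Fin K → Act) :
    J lam rho L Ahb Ahd Ahr V x w = (∑ k, ((x k).2.2.1 : ℝ)) +
      ∑ ω, jointWeight lam rho ω * V (jointSucc L Ahb Ahd Ahr w ω x) := by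
  simp only [J, Pjoint_eq_sum_jointWeight, Finset.sum_mul]
  rw [Finset.sum_comm]
  congr 1
  refine Finset.sum_congr rfl fun ω _ => ?_
  simp only [mul_ite, mul_one, mul_zero, ite_mul, zero_mul]
  rw [Finset.sum_ite_eq', if_pos (jointSucc_mem_jointSpace hL hAb hAd w ω hx)]

lemma J_congr_of_jointSucc_eq (V : (Fin K → S) → ℝ) {x y : Fin K → S} {w : Fin K → Act}
    (hr : ∀ k, (x k).2.2.1 = (y k).2.2.1)
    (hsucc : ∀ ω, jointSucc L Ahb Ahd Ahr w ω x = jointSucc L Ahb Ahd Ahr w ω y) :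
    J lam rho L Ahb Ahd Ahr V x w = J lam rho L Ahb Ahd Ahr V y w := by
  simp only [J, Pjoint_eq_sum_jointWeight, hsucc, hr]

lemma J_mono_state (hlam : ∀ k, 0 ≤ lam k ∧ lam k ≤ 1) (hrho : ∀ k, 0 ≤ rho k ∧ rho k ≤ 1)
    (hL : ∀ k, 2 ≤ L k) (hAb : ∀ k, 1 ≤ Ahb k) (hAd : ∀ k, 1 ≤ Ahd k) {V : (Fin K → S) → ℝ}
    (hV : ∀ x1 ∈ jointSpace L Ahb Ahd Ahr, ∀ x2 ∈ jointSpace L Ahb Ahd Ahr,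
      (∀ k, xleS (x1 k) (x2 k)) → V x1 ≤ V x2)
    {x y : Fin K → S} (hx : x ∈ jointSpace L Ahb Ahd Ahr) (hy : y ∈ jointSpace L Ahb Ahd Ahr)
    (hxy : ∀ k, xleS (x k) (y k)) (w : Fin K → Act) :
    J lam rho L Ahb Ahd Ahr V x w ≤ J lam rho L Ahb Ahd Ahr V y w := by
  rw [J_eq_sum_jointWeight hL hAb hAd V hx, J_eq_sum_jointWeight hL hAb hAd V hy]
  gcongr with k _ ω
  · exact (hxy k).2.2.1
  · exact jointWeight_nonneg hlam hrho ω
  · exact hV _ (jointSucc_mem_jointSpace hL hAb hAd w ω hx) _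
      (jointSucc_mem_jointSpace hL hAb hAd w ω hy)
      fun k => succState_mono _ _ _ _ _ _ (hxy k)

end Joint

theorem submodularity_state_action_cost_random_general
    (K M : ℕ)
    (lam rho : Fin K → ℝ) (L Ahb Ahd Ahr : Fin K → ℕ)
    (hlam : ∀ k, 0 < lam k ∧ lam k ≤ 1) (hrho : ∀ k, 0 ≤ rho k ∧ rho k ≤ 1)
    (hL : ∀ k, 2 ≤ L k) (hAb : ∀ k, 1 ≤ Ahb k)
    (hAd : ∀ k, 1 ≤ Ahd k)
    (V : (Fin K → S) → ℝ)
    (hV : ∀ x1 ∈ jointSpace L Ahb Ahd Ahr, ∀ x2 ∈ jointSpace L Ahb Ahd Ahr,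
      (∀ k, xleS (x1 k) (x2 k)) → V x1 ≤ V x2)
    (w : Fin K → Act)
    (x1 x2 : Fin K → S)
    (hx1 : x1 ∈ jointSpace L Ahb Ahd Ahr) (hx2 : x2 ∈ jointSpace L Ahb Ahd Ahr)
    (hb : ∀ k, (x1 k).1 = (x2 k).1)
    (hr : ∀ k, (x1 k).2.2.1 = (x2 k).2.2.1)
    (hd : ∀ k, (x1 k).2.2.2 = (x2 k).2.2.2)
    (hnew : ∀ k, w k = Act.new → (x2 k).2.1 ≤ (x1 k).2.1)
    (hoth : ∀ k, w k ≠ Act.new → (x1 k).2.1 = (x2 k).2.1) :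
    ∀ w' ∈ feasible K M,
      J lam rho L Ahb Ahd Ahr V x1 w - J lam rho L Ahb Ahd Ahr V x1 w' ≤
        J lam rho L Ahb Ahd Ahr V x2 w - J lam rho L Ahb Ahd Ahr V x2 w' := by
  intro w' _
  have hsame : J lam rho L Ahb Ahd Ahr V x1 w = J lam rho L Ahb Ahd Ahr V x2 w := by
    refine J_congr_of_jointSucc_eq V hr fun ω => funext fun k => ?_
    by_cases hk : w k = Act.new
    · simp only [jointSucc, hk]
      exact succState_new_congr _ _ _ _ _ (hb k) (hr k)
    · have hx : x1 k = x2 k := Prod.ext (hb k) (Prod.ext (hoth k hk) (Prod.ext (hr k) (hd k)))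
      simp only [jointSucc, hx]
  have hle : ∀ k, xleS (x2 k) (x1 k) := fun k =>
    ⟨(hb k).ge, if hk : w k = Act.new then hnew k hk else (hoth k hk).ge, (hr k).ge, (hd k).symm⟩
  have hmono : J lam rho L Ahb Ahd Ahr V x2 w' ≤ J lam rho L Ahb Ahd Ahr V x1 w' :=
    J_mono_state (fun k => ⟨(hlam k).1.le, (hlam k).2⟩) hrho hL hAb hAd hV hx2 hx1 hle w'
  linarith

/-- submodularity-type inequality for the state–action cost in
the random-arrival model. -/
theorem submodularity_state_action_cost_random
    (K M : ℕ) (hK : 1 ≤ K) (hM1 : 1 ≤ M) (hM2 : M ≤ K)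
    (lam rho : Fin K → ℝ) (L Ahb Ahd Ahr : Fin K → ℕ)
    (hlam : ∀ k, 0 < lam k ∧ lam k ≤ 1) (hrho : ∀ k, 0 ≤ rho k ∧ rho k ≤ 1)
    (hL : ∀ k, 2 ≤ L k) (hAb : ∀ k, 1 ≤ Ahb k)
    (hAd : ∀ k, 1 ≤ Ahd k) (hAr : ∀ k, 1 ≤ Ahr k)
    (V : (Fin K → S) → ℝ)
    (hV : ∀ x1 ∈ jointSpace L Ahb Ahd Ahr, ∀ x2 ∈ jointSpace L Ahb Ahd Ahr,
      (∀ k, xleS (x1 k) (x2 k)) → V x1 ≤ V x2)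
    (w : Fin K → Act) (hw : w ∈ feasible K M)
    (x1 x2 : Fin K → S)
    (hx1 : x1 ∈ jointSpace L Ahb Ahd Ahr) (hx2 : x2 ∈ jointSpace L Ahb Ahd Ahr)
    (hb : ∀ k, (x1 k).1 = (x2 k).1)
    (hr : ∀ k, (x1 k).2.2.1 = (x2 k).2.2.1)
    (hd : ∀ k, (x1 k).2.2.2 = (x2 k).2.2.2)
    (hnew : ∀ k, w k = Act.new → (x2 k).2.1 ≤ (x1 k).2.1)
    (hoth : ∀ k, w k ≠ Act.new → (x1 k).2.1 = (x2 k).2.1) :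
    ∀ w' ∈ feasible K M,
      J lam rho L Ahb Ahd Ahr V x1 w - J lam rho L Ahb Ahd Ahr V x1 w' ≤
        J lam rho L Ahb Ahd Ahr V x2 w - J lam rho L Ahb Ahd Ahr V x2 w' :=
  submodularity_state_action_cost_random_general K M lam rho L Ahb Ahd Ahr hlam hrho hL hAb hAd V hV
    w x1 x2 hx1 hx2 hb hr hd hnew hoth

end AoIRandom
end

section
/- Threshold structure of the optimal policy in the random-arrival model (Theorem 3). Let V : X → ℝ be monotone with respect to ⪯ (as holds for the value function of the random-arrival average-AoI MDP by Lemma 5). Fix a device k, a feasible action w* ∈ W with w*_k = (1,2), and values of all state components other than A_{d,k}; for a ∈ {0,…,Âd_k} let X(a) denote the state with A_{d,k} = a and the other components as fixed. Then the set Φ = {a ∈ {0,…,Âd_k} : J_V(X(a), w*) ≤ J_V(X(a), w') for all w' ∈ W} is upward closed: if a ∈ Φ and a ≤ a' ≤ Âd_k then a' ∈ Φ. Equivalently, w* minimizes J_V(X(a'), ·) over W for every a' ≥ min Φ (when Φ ≠ ∅); i.e., the optimal scheduling-and-sampling decision w* with w*_k = (1,2) is threshold-based in the AoI A_{d,k}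 at device k. -/
namespace AoIRandom

/-! ### Auxiliary machinery -/

lemma xleS_refl (x : S) : xleS x x := ⟨le_refl _, le_refl _, le_refl _, rfl⟩

/-- Probability of the outcome `(arrival?, success?)`. -/
def pr (lam rho : ℝ) (o : Bool × Bool) : ℝ :=
  (if o.1 then rho else 1 - rho) * (if o.2 then lam else 1 - lam)

lemma pr_nonneg {lam rho : ℝ} (h1 : 0 ≤ lam) (h2 : lam ≤ 1) (h3 : 0 ≤ rho)
    (h4 : rho ≤ 1) (o : Bool × Bool) : 0 ≤ pr lam rho o := by
  unfold pr; rcases o with ⟨_ | _, _ | _⟩ <;> simp <;> nlinarith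

/-- Successor state for outcome `(arrival?, success?)`. -/
def nxt (L Ahb Ahd Ahr : ℕ) (x : S) : Act → Bool × Bool → S
  | Act.idle, o => if o.1 then fCont1 Ahd Ahr x else fCont2 Ahb Ahd Ahr x
  | Act.cont, o =>
      if o.1 then (if o.2 then sCont1 L Ahd Ahr x else fCont1 Ahd Ahr x)
      else (if o.2 then sCont2 L Ahb Ahd Ahr x else fCont2 Ahb Ahd Ahr x)
  | Act.new, o =>
      if o.1 then (if o.2 then sNew1 L Ahr x else fNew1 L Ahr x)
      else (if o.2 then sNew2 L Ahb Ahd Ahr x else fNew2 L Ahb Ahd Ahr x)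

lemma Pk_eq (lam rho : ℝ) (L Ahb Ahd Ahr : ℕ) (x x' : S) (a : Act) :
    Pk lam rho L Ahb Ahd Ahr x x' a =
      ∑ o : Bool × Bool, pr lam rho o *
        (if x' = nxt L Ahb Ahd Ahr x a o then 1 else 0) := by
  cases a <;> simp [Pk, pr, nxt, Fintype.sum_prod_type] <;> split_ifs <;> ring

lemma mem_spaceS {L Ahb Ahd Ahr : ℕ} {x : S} :
    x ∈ spaceS L Ahb Ahd Ahr ↔
      x.1 ≤ Ahb ∧ x.2.1 ≤ Ahd ∧ x.2.2.1 ≤ Ahr ∧ 1 ≤ x.2.2.2 ∧ x.2.2.2 ≤ L := by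
  simp [spaceS, Finset.mem_product, Nat.lt_succ_iff, and_assoc]

lemma nxt_mem {L Ahb Ahd Ahr : ℕ} (hL : 2 ≤ L) (hAb : 1 ≤ Ahb) (hAd : 1 ≤ Ahd)
    (hAr : 1 ≤ Ahr) {x : S} (hx : x ∈ spaceS L Ahb Ahd Ahr) (w : Act)
    (o : Bool × Bool) : nxt L Ahb Ahd Ahr x w o ∈ spaceS L Ahb Ahd Ahr := by
  rw [mem_spaceS] at hx ⊢
  obtain ⟨h1, h2, h3, h4, h5⟩ := hx
  cases w <;> rcases o with ⟨_ | _, _ | _⟩ <;>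
    simp only [nxt, sCont1, sCont2, fCont1, fCont2, sNew1, sNew2, fNew1, fNew2,
      Bool.false_eq_true, if_false, if_true] <;>
    (try split_ifs) <;> (try simp) <;> omega

lemma nxt_new_eq (L Ahb Ahd Ahr : ℕ) {x y : S} (hb : x.1 = y.1)
    (hr : x.2.2.1 = y.2.2.1) (hD : x.2.2.2 = y.2.2.2) (o : Bool × Bool) :
    nxt L Ahb Ahd Ahr x Act.new o = nxt L Ahb Ahd Ahr y Act.new o := by
  rcases o with ⟨_ | _, _ | _⟩ <;>
    simp [nxt, sNew1, sNew2, fNew1, fNew2, hb, hr, hD]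

lemma nxt_mono (L Ahb Ahd Ahr : ℕ) {x y : S} (hb : x.1 = y.1) (hd : x.2.1 ≤ y.2.1)
    (hr : x.2.2.1 = y.2.2.1) (hD : x.2.2.2 = y.2.2.2) (w : Act) (o : Bool × Bool) :
    xleS (nxt L Ahb Ahd Ahr x w o) (nxt L Ahb Ahd Ahr y w o) := by
  cases w <;> rcases o with ⟨_ | _, _ | _⟩ <;>
    simp only [nxt, sCont1, sCont2, fCont1, fCont2, sNew1, sNew2, fNew1, fNew2,
      xleS, Bool.false_eq_true, if_false, if_true, hb, hr, hD] <;>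
    (try split_ifs) <;> (try simp) <;> omega

lemma prod_ite_eq_ite {K : ℕ} (x' n : Fin K → S) :
    (∏ k, (if x' k = n k then (1 : ℝ) else 0)) = if x' = n then 1 else 0 := by
  by_cases h : x' = n
  · subst h; simp
  · rw [if_neg h]
    obtain ⟨j, hj⟩ := Function.ne_iff.mp h
    exact Finset.prod_eq_zero (Finset.mem_univ j) (if_neg hj)

lemma sum_J {K : ℕ} (lam rho : Fin K → ℝ) (L Ahb Ahd Ahr : Fin K → ℕ)
    (hL : ∀ k, 2 ≤ L k) (hAb : ∀ k, 1 ≤ Ahb k) (hAd : ∀ k, 1 ≤ Ahd k)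
    (hAr : ∀ k, 1 ≤ Ahr k) (V : (Fin K → S) → ℝ) (x : Fin K → S)
    (hx : x ∈ jointSpace L Ahb Ahd Ahr) (w : Fin K → Act) :
    ∑ x' ∈ jointSpace L Ahb Ahd Ahr, Pjoint lam rho L Ahb Ahd Ahr x x' w * V x' =
      ∑ ω : Fin K → Bool × Bool,
        (∏ k, pr (lam k) (rho k) (ω k)) *
          V (fun k => nxt (L k) (Ahb k) (Ahd k) (Ahr k) (x k) (w k) (ω k)) := by
  have hmem : ∀ k, x k ∈ spaceS (L k) (Ahb k) (Ahd k) (Ahr k) :=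
    fun k => Fintype.mem_piFinset.mp hx k
  have hP : ∀ x', Pjoint lam rho L Ahb Ahd Ahr x x' w =
      ∑ ω : Fin K → Bool × Bool, ∏ k,
        (pr (lam k) (rho k) (ω k) *
          (if x' k = nxt (L k) (Ahb k) (Ahd k) (Ahr k) (x k) (w k) (ω k) then
            (1 : ℝ) else 0)) := by
    intro x'
    unfold Pjoint
    simp_rw [Pk_eq]
    rw [Finset.prod_univ_sum, Fintype.piFinset_univ]
  simp_rw [hP, Finset.sum_mul]
  rw [Finset.sum_comm]
  refine Finset.sum_congr rfl fun ω _ => ?_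
  have hn : (fun k => nxt (L k) (Ahb k) (Ahd k) (Ahr k) (x k) (w k) (ω k)) ∈
      jointSpace L Ahb Ahd Ahr :=
    Fintype.mem_piFinset.mpr fun k =>
      nxt_mem (hL k) (hAb k) (hAd k) (hAr k) (hmem k) (w k) (ω k)
  simp_rw [Finset.prod_mul_distrib, prod_ite_eq_ite, mul_assoc]
  rw [← Finset.mul_sum]
  congr 1
  simp_rw [ite_mul, one_mul, zero_mul]
  rw [Finset.sum_ite_eq' _ _ V, if_pos hn]

/-- Theorem 3: threshold structure of the optimal policy in the
random-arrival model. With all state components other than `A_{d,k}` fixed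
(encoded by `x0`), the set of values `a` of `A_{d,k}` at which the action `w*`
(with `w*_k = (1,2)`) minimizes `J_V(X(a), ·)` over `W` is upward closed in
`{0,…,Âd_k}`. -/
theorem threshold_structure_optimal_policy_random
    (K M : ℕ) (hK : 1 ≤ K) (hM1 : 1 ≤ M) (hM2 : M ≤ K)
    (lam rho : Fin K → ℝ) (L Ahb Ahd Ahr : Fin K → ℕ)
    (hlam : ∀ k, 0 < lam k ∧ lam k ≤ 1) (hrho : ∀ k, 0 ≤ rho k ∧ rho k ≤ 1)
    (hL : ∀ k, 2 ≤ L k) (hAb : ∀ k, 1 ≤ Ahb k)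
    (hAd : ∀ k, 1 ≤ Ahd k) (hAr : ∀ k, 1 ≤ Ahr k)
    (V : (Fin K → S) → ℝ)
    (hV : ∀ x1 ∈ jointSpace L Ahb Ahd Ahr, ∀ x2 ∈ jointSpace L Ahb Ahd Ahr,
      (∀ k, xleS (x1 k) (x2 k)) → V x1 ≤ V x2)
    (k : Fin K)
    (wstar : Fin K → Act) (hwfeas : wstar ∈ feasible K M) (hwk : wstar k = Act.new)
    (x0 : Fin K → S) (hx0 : x0 ∈ jointSpace L Ahb Ahd Ahr) :
    ∀ a a' : ℕ, a ≤ a' → a' ≤ Ahd k →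
      (∀ w' ∈ feasible K M,
        J lam rho L Ahb Ahd Ahr V
            (Function.update x0 k ((x0 k).1, a, (x0 k).2.2)) wstar ≤
          J lam rho L Ahb Ahd Ahr V
            (Function.update x0 k ((x0 k).1, a, (x0 k).2.2)) w') →
      (∀ w' ∈ feasible K M,
        J lam rho L Ahb Ahd Ahr V
            (Function.update x0 k ((x0 k).1, a', (x0 k).2.2)) wstar ≤
          J lam rho L Ahb Ahd Ahr V
            (Function.update x0 k ((x0 k).1, a', (x0 k).2.2)) w') := by
  intro a a' haa' ha'le hopt w' hw'
  have ha : a ≤ Ahd k := le_trans haa' ha'le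
  set xa : Fin K → S := Function.update x0 k ((x0 k).1, a, (x0 k).2.2) with hxadef
  set xb : Fin K → S := Function.update x0 k ((x0 k).1, a', (x0 k).2.2) with hxbdef
  have hx0k : ∀ j, x0 j ∈ spaceS (L j) (Ahb j) (Ahd j) (Ahr j) :=
    fun j => Fintype.mem_piFinset.mp hx0 j
  have h0 : ∀ j, (x0 j).1 ≤ Ahb j ∧ (x0 j).2.1 ≤ Ahd j ∧ (x0 j).2.2.1 ≤ Ahr j ∧
      1 ≤ (x0 j).2.2.2 ∧ (x0 j).2.2.2 ≤ L j := fun j => mem_spaceS.mp (hx0k j)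
  have hupd : ∀ b : ℕ, b ≤ Ahd k →
      Function.update x0 k ((x0 k).1, b, (x0 k).2.2) ∈ jointSpace L Ahb Ahd Ahr := by
    intro b hb
    refine Fintype.mem_piFinset.mpr fun j => ?_
    rcases eq_or_ne j k with rfl | hj
    · rw [Function.update_self, mem_spaceS]
      exact ⟨(h0 j).1, hb, (h0 j).2.2⟩
    · rw [Function.update_of_ne hj]; exact hx0k j
  have hxa_mem : xa ∈ jointSpace L Ahb Ahd Ahr := hupd a ha
  have hxb_mem : xb ∈ jointSpace L Ahb Ahd Ahr := hupd a' ha'le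
  have hcost : ∀ j : Fin K, ((xa j).2.2.1 : ℝ) = ((xb j).2.2.1 : ℝ) := by
    intro j
    rcases eq_or_ne j k with rfl | hj
    · rw [hxadef, hxbdef, Function.update_self, Function.update_self]
    · rw [hxadef, hxbdef, Function.update_of_ne hj, Function.update_of_ne hj]
  have hcosteq : (∑ j, ((xa j).2.2.1 : ℝ)) = ∑ j, ((xb j).2.2.1 : ℝ) :=
    Finset.sum_congr rfl fun j _ => hcost j
  -- J at wstar does not depend on a since wstar k = new
  have hJeq : J lam rho L Ahb Ahd Ahr V xb wstar = J lam rho L Ahb Ahd Ahr V xa wstar := by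
    unfold J
    rw [sum_J lam rho L Ahb Ahd Ahr hL hAb hAd hAr V xb hxb_mem wstar,
      sum_J lam rho L Ahb Ahd Ahr hL hAb hAd hAr V xa hxa_mem wstar, hcosteq]
    congr 1
    refine Finset.sum_congr rfl fun ω _ => ?_
    have hfun : (fun j => nxt (L j) (Ahb j) (Ahd j) (Ahr j) (xb j) (wstar j) (ω j))
        = fun j => nxt (L j) (Ahb j) (Ahd j) (Ahr j) (xa j) (wstar j) (ω j) := by
      funext j
      rcases eq_or_ne j k with rfl | hj
      · rw [hxadef, hxbdef, Function.update_self, Function.update_self, hwk]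
        exact nxt_new_eq (L j) (Ahb j) (Ahd j) (Ahr j)
          (x := ((x0 j).1, a', (x0 j).2.2)) (y := ((x0 j).1, a, (x0 j).2.2))
          rfl rfl rfl (ω j)
      · rw [hxadef, hxbdef, Function.update_of_ne hj, Function.update_of_ne hj]
    rw [hfun]
  -- J at any action is monotone in a
  have hJle : J lam rho L Ahb Ahd Ahr V xa w' ≤ J lam rho L Ahb Ahd Ahr V xb w' := by
    unfold J
    rw [sum_J lam rho L Ahb Ahd Ahr hL hAb hAd hAr V xa hxa_mem w',
      sum_J lam rho L Ahb Ahd Ahr hL hAb hAd hAr V xb hxb_mem w', hcosteq]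
    refine add_le_add le_rfl (Finset.sum_le_sum fun ω _ => ?_)
    have hpr : 0 ≤ ∏ j, pr (lam j) (rho j) (ω j) :=
      Finset.prod_nonneg fun j _ =>
        pr_nonneg (le_of_lt (hlam j).1) (hlam j).2 (hrho j).1 (hrho j).2 _
    refine mul_le_mul_of_nonneg_left ?_ hpr
    refine hV _ (Fintype.mem_piFinset.mpr fun j =>
        nxt_mem (hL j) (hAb j) (hAd j) (hAr j) (Fintype.mem_piFinset.mp hxa_mem j) _ _)
      _ (Fintype.mem_piFinset.mpr fun j =>
        nxt_mem (hL j) (hAb j) (hAd j) (hAr j) (Fintype.mem_piFinset.mp hxb_mem j) _ _)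
      fun j => ?_
    rcases eq_or_ne j k with rfl | hj
    · have hxaj : xa j = ((x0 j).1, a, (x0 j).2.2) := by
        rw [hxadef, Function.update_self]
      have hxbj : xb j = ((x0 j).1, a', (x0 j).2.2) := by
        rw [hxbdef, Function.update_self]
      rw [hxaj, hxbj]
      exact nxt_mono (L j) (Ahb j) (Ahd j) (Ahr j)
        (x := ((x0 j).1, a, (x0 j).2.2)) (y := ((x0 j).1, a', (x0 j).2.2))
        rfl haa' rfl rfl (w' j) (ω j)
    · have : xa j = xb j := by
        rw [hxadef, hxbdef, Function.update_of_ne hj, Function.update_of_ne hj]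
      rw [this]
      exact xleS_refl _
  calc J lam rho L Ahb Ahd Ahr V xb wstar
      = J lam rho L Ahb Ahd Ahr V xa wstar := hJeq
    _ ≤ J lam rho L Ahb Ahd Ahr V xa w' := hopt w' hw'
    _ ≤ J lam rho L Ahb Ahd Ahr V xb w' := hJle

end AoIRandom
end
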